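/- The 4×4 matrix d with rows (0,1,1,2), (1,0,2,1), (1,2,0,2), (2,1,2,0) is a metric of strict negative type, its peel distribution is p*(d) = (1,1,2,2)/6 with full support {1,2,3,4}, but the peel of the restriction d|_{{1,2,3}} is {2,3} ≠ {1,2,3}. Hence a subset of a peel need not equal its own peel. -/

import Mathlib

open Matrix BigOperators

/-!
If `d` is symmetric and `d p` is a constant vector, then for `q = p + x` with `∑ x = 0` the
cross terms vanish and `qᵀ d q = pᵀ d p + xᵀ d x`; under strict negative type this makes `p` the
unique maximizer of the quadratic form on the simplex. Both `(1,1,2,2)/6` for `d` and `(0,1,1)/2`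
for its restriction to the first three points are such vectors. Strict negative type of `d` comes
from writing `xᵀ d x` as minus a sum of squares on `∑ x = 0`, and the restriction inherits it by
extending vectors by zero.
-/

/-- The counterexample metric of strict negative type. -/
def dEx : Matrix (Fin 4) (Fin 4) ℝ :=
  !![0, 1, 1, 2; 1, 0, 2, 1; 1, 2, 0, 2; 2, 1, 2, 0]

/-- Its restriction to the first three points. -/
def dEx3 : Matrix (Fin 3) (Fin 3) ℝ :=
  dEx.submatrix (Fin.castLE (by norm_num)) (Fin.castLE (by norm_num))

def IsStrictNegType {n : Type*} [Fintype n] (d : Matrix n n ℝ) : Prop :=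
  ∀ x : n → ℝ, x ≠ 0 → ∑ i, x i = 0 → x ⬝ᵥ d *ᵥ x < 0

section StrictNegType

variable {n : Type*} [Fintype n] {d : Matrix n n ℝ} {p q : n → ℝ} {c : ℝ}

theorem dotProduct_mulVec_eq_add_of_mulVec_eq_const (hd : d.IsSymm)
    (hp : d *ᵥ p = fun _ => c) (hsum : ∑ i, q i = ∑ i, p i) :
    q ⬝ᵥ d *ᵥ q = p ⬝ᵥ d *ᵥ p + (q - p) ⬝ᵥ d *ᵥ (q - p) := by
  obtain ⟨x, rfl⟩ : ∃ x, q = p + x := ⟨q - p, by abel⟩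
  have hxsum : ∑ i, x i = 0 := by simpa [Finset.sum_add_distrib] using hsum
  have hcross : x ⬝ᵥ d *ᵥ p = 0 := by
    simp [hp, dotProduct, ← Finset.sum_mul, hxsum]
  have hsymm : p ⬝ᵥ d *ᵥ x = x ⬝ᵥ d *ᵥ p := by
    rw [dotProduct_mulVec, ← mulVec_transpose, hd.eq, dotProduct_comm]
  simp only [add_sub_cancel_left, mulVec_add, dotProduct_add, add_dotProduct, hsymm, hcross]
  ring

theorem IsStrictNegType.dotProduct_mulVec_lt (h : IsStrictNegType d) (hd : d.IsSymm)
    (hp : d *ᵥ p = fun _ => c) (hsum : ∑ i, q i = ∑ i, p i) (hne : q ≠ p) :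
    q ⬝ᵥ d *ᵥ q < p ⬝ᵥ d *ᵥ p := by
  rw [dotProduct_mulVec_eq_add_of_mulVec_eq_const hd hp hsum]
  have := h (q - p) (sub_ne_zero.mpr hne) (by simp [Finset.sum_sub_distrib, hsum])
  linarith

theorem IsStrictNegType.dotProduct_mulVec_le (h : IsStrictNegType d) (hd : d.IsSymm)
    (hp : d *ᵥ p = fun _ => c) (hsum : ∑ i, q i = ∑ i, p i) :
    q ⬝ᵥ d *ᵥ q ≤ p ⬝ᵥ d *ᵥ p := by
  rcases eq_or_ne q p with rfl | hne
  · rfl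
  · exact (h.dotProduct_mulVec_lt hd hp hsum hne).le

theorem IsStrictNegType.eq_of_dotProduct_mulVec_le (h : IsStrictNegType d) (hd : d.IsSymm)
    (hp : d *ᵥ p = fun _ => c) (hsum : ∑ i, q i = ∑ i, p i)
    (hle : p ⬝ᵥ d *ᵥ p ≤ q ⬝ᵥ d *ᵥ q) : q = p := by
  by_contra hne
  exact (h.dotProduct_mulVec_lt hd hp hsum hne).not_ge hle

section Extend

variable {m : Type*} [Fintype m] {f : m → n}

theorem dotProduct_extend_zero (hf : Function.Injective f) (x : m → ℝ) (w : n → ℝ) :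
    Function.extend f x 0 ⬝ᵥ w = x ⬝ᵥ (w ∘ f) := by
  refine (Fintype.sum_of_injective f hf _ _ (fun b hb => ?_) (fun a => ?_)).symm
  · simp [Function.extend_apply' _ _ _ (by simpa using hb)]
  · simp [hf.extend_apply]

theorem mulVec_extend_zero_comp (hf : Function.Injective f) (M : Matrix n n ℝ) (x : m → ℝ) :
    (M *ᵥ Function.extend f x 0) ∘ f = M.submatrix f f *ᵥ x := by
  ext i
  simp only [Function.comp_apply, mulVec, dotProduct_comm (M (f i)),
    dotProduct_extend_zero hf]
  exact dotProduct_comm _ _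

theorem IsStrictNegType.submatrix (h : IsStrictNegType d) (hf : Function.Injective f) :
    IsStrictNegType (d.submatrix f f) := by
  intro x hx hsum
  have hext := dotProduct_extend_zero hf x
  have hy : Function.extend f x 0 ≠ 0 := fun h0 =>
    hx (funext fun i => by simpa [hf.extend_apply] using congrFun h0 (f i))
  have := h _ hy (by simpa [dotProduct_one, hsum] using hext 1)
  rwa [hext, mulVec_extend_zero_comp hf] at this

end Extend

end StrictNegType

theorem dEx_isSymm : dEx.IsSymm := by
  ext i j; fin_cases i <;> fin_cases j <;> rfl

theorem dEx_apply_self (i : Fin 4) : dEx i i = 0 := by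
  fin_cases i <;> rfl

theorem dEx_pos {i j : Fin 4} (hij : i ≠ j) : 0 < dEx i j := by
  fin_cases i <;> fin_cases j <;> simp_all [dEx]

theorem dEx_triangle (i j k : Fin 4) : dEx i k ≤ dEx i j + dEx j k := by
  fin_cases i <;> fin_cases j <;> fin_cases k <;> norm_num [dEx]

theorem dotProduct_dEx_mulVec_of_sum_eq_zero {x : Fin 4 → ℝ} (hx : ∑ i, x i = 0) :
    x ⬝ᵥ dEx *ᵥ x = -(2 * (x 1 + x 3) ^ 2 + (2 * x 2 + x 3) ^ 2 / 2 + 3 * x 3 ^ 2 / 2) := by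
  rw [Fin.sum_univ_four] at hx
  have hx0 : x 0 = -(x 1 + x 2 + x 3) := by linarith
  simp [dEx, dotProduct, mulVec, Fin.sum_univ_four, hx0]
  ring

theorem isStrictNegType_dEx : IsStrictNegType dEx := by
  intro x hx hsum
  rw [dotProduct_dEx_mulVec_of_sum_eq_zero hsum]
  by_contra hnonneg
  have h3 : x 3 = 0 := by nlinarith [sq_nonneg (x 1 + x 3), sq_nonneg (2 * x 2 + x 3)]
  have h2 : x 2 = 0 := by nlinarith [sq_nonneg (x 1 + x 3), sq_nonneg (2 * x 2 + x 3)]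
  have h1 : x 1 = 0 := by nlinarith [sq_nonneg (x 1 + x 3), sq_nonneg (2 * x 2 + x 3)]
  have h0 : x 0 = 0 := by simpa [Fin.sum_univ_four, h1, h2, h3] using hsum
  exact hx (funext fun i => by fin_cases i <;> assumption)

theorem dEx_mulVec_peel : dEx *ᵥ ![1/6, 1/6, 1/3, 1/3] = fun _ => 7/6 := by
  ext i
  fin_cases i <;>
    norm_num [dEx, mulVec, dotProduct, Fin.sum_univ_four, cons_val_two, cons_val_three]

theorem dEx3_eq : dEx3 = !![0, 1, 1; 1, 0, 2; 1, 2, 0] := by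
  ext i j; fin_cases i <;> fin_cases j <;> rfl

theorem dEx3_mulVec_peel : dEx3 *ᵥ ![0, 1/2, 1/2] = fun _ => 1 := by
  ext i; fin_cases i <;> norm_num [dEx3_eq, mulVec, dotProduct, Fin.sum_univ_three, cons_val_two]

theorem dEx3_isSymm : dEx3.IsSymm := dEx_isSymm.submatrix _

theorem isStrictNegType_dEx3 : IsStrictNegType dEx3 :=
  isStrictNegType_dEx.submatrix (Fin.castLE_injective _)

/-- The 4×4 matrix with rows (0,1,1,2), (1,0,2,1), (1,2,0,2), (2,1,2,0) is a metric of
strict negative type; its peel distribution is `(1,1,2,2)/6`, with full support; but the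
peel of the restriction to the first three points is `{2,3} ≠ {1,2,3}`: every maximizer of
the restricted quadratic form over the simplex vanishes at the first point and is nonzero at
the other two. Hence a subset of a peel need not equal its own peel. -/
theorem stmt13 :
    dEx.IsSymm ∧ (∀ i, dEx i i = 0) ∧ (∀ i j, i ≠ j → 0 < dEx i j) ∧
    (∀ i j k, dEx i k ≤ dEx i j + dEx j k) ∧
    (∀ x : Fin 4 → ℝ, x ≠ 0 → ∑ i, x i = 0 → x ⬝ᵥ dEx.mulVec x < 0) ∧
    (![1/6, 1/6, 1/3, 1/3] : Fin 4 → ℝ) ∈ stdSimplex ℝ (Fin 4) ∧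
    (∀ q ∈ stdSimplex ℝ (Fin 4),
      q ⬝ᵥ dEx.mulVec q ≤
        (![1/6, 1/6, 1/3, 1/3] : Fin 4 → ℝ) ⬝ᵥ dEx.mulVec ![1/6, 1/6, 1/3, 1/3]) ∧
    (∀ i : Fin 4, (![1/6, 1/6, 1/3, 1/3] : Fin 4 → ℝ) i ≠ 0) ∧
    (![0, 1/2, 1/2] : Fin 3 → ℝ) ∈ stdSimplex ℝ (Fin 3) ∧
    (∀ q ∈ stdSimplex ℝ (Fin 3),
      q ⬝ᵥ dEx3.mulVec q ≤
        (![0, 1/2, 1/2] : Fin 3 → ℝ) ⬝ᵥ dEx3.mulVec ![0, 1/2, 1/2]) ∧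
    (∀ q ∈ stdSimplex ℝ (Fin 3),
      (∀ r ∈ stdSimplex ℝ (Fin 3), r ⬝ᵥ dEx3.mulVec r ≤ q ⬝ᵥ dEx3.mulVec q) →
      q 0 = 0 ∧ q 1 ≠ 0 ∧ q 2 ≠ 0) := by
  have hp4 : (![1/6, 1/6, 1/3, 1/3] : Fin 4 → ℝ) ∈ stdSimplex ℝ (Fin 4) :=
    ⟨fun i => by fin_cases i <;> norm_num,
      by norm_num [Fin.sum_univ_four, cons_val_two, cons_val_three]⟩
  have hp3 : (![0, 1/2, 1/2] : Fin 3 → ℝ) ∈ stdSimplex ℝ (Fin 3) :=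
    ⟨fun i => by fin_cases i <;> norm_num, by norm_num [Fin.sum_univ_three, cons_val_two]⟩
  have hsum4 {q : Fin 4 → ℝ} (hq : q ∈ stdSimplex ℝ (Fin 4)) := hq.2.trans hp4.2.symm
  have hsum3 {q : Fin 3 → ℝ} (hq : q ∈ stdSimplex ℝ (Fin 3)) := hq.2.trans hp3.2.symm
  refine ⟨dEx_isSymm, dEx_apply_self, fun i j => dEx_pos, dEx_triangle, isStrictNegType_dEx,
    hp4,
    fun q hq => isStrictNegType_dEx.dotProduct_mulVec_le dEx_isSymm dEx_mulVec_peel (hsum4 hq),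
    fun i => by fin_cases i <;> norm_num, hp3,
    fun q hq => isStrictNegType_dEx3.dotProduct_mulVec_le dEx3_isSymm dEx3_mulVec_peel (hsum3 hq),
    fun q hq hmax => ?_⟩
  obtain rfl := isStrictNegType_dEx3.eq_of_dotProduct_mulVec_le dEx3_isSymm dEx3_mulVec_peel
    (hsum3 hq) (hmax _ hp3)
  norm_num [cons_val_two]
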